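/- For every λ = (λ1,λ2) ∈ ℕ₀², one can write P_λ(s,t) = Σ_{j=0}^{n} (s·t)^j·(A_j(s) + B_j(t)) for some n ∈ ℕ₀ and polynomials A_j(s) ∈ ℤ[s] with deg A_j ≤ ⌊λ2/2⌋ and B_j(t) ∈ ℤ[t] with deg B_j ≤ ⌊λ1/2⌋. Moreover: (i) if λ2 is even, one may additionally arrange that deg A_j ≤ ⌊λ2/2⌋ − 1 for all j > 0 and that B_j(0) = 0 for all j; (ii) if λ1 is even, one may instead arrange that deg B_j ≤ ⌊λ1/2⌋ − 1 for all j > 0 and that A_j(0) = 0 for all j. -/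

import Mathlib

open MvPolynomial

noncomputable section

abbrev Rxy : Type := MvPolynomial (Fin 2) ℤ

/-- The fraction field of ℤ[x,y]. -/
abbrev Kxy : Type := FractionRing Rxy

/-- The image of `x` in the fraction field. -/
noncomputable def xx : Kxy := algebraMap Rxy Kxy (X 0)

/-- The image of `y` in the fraction field. -/
noncomputable def yy : Kxy := algebraMap Rxy Kxy (X 1)

/-- `s = x / y²`. -/
noncomputable def sv : Kxy := xx / yy ^ 2

/-- `t = y / x²`. -/
noncomputable def tv : Kxy := yy / xx ^ 2

/-- Evaluation of a two-variable integer polynomial at `(s, t)` in the fraction field. -/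
noncomputable def evST (p : Rxy) : Kxy := aeval ![sv, tv] p

/-- Defining properties of the SU(3) character polynomials `Q a b`
(with the convention `Q a b = 0` whenever `(a, b) ∉ ℕ₀²`). -/
def IsQSU3 (Q : ℤ → ℤ → Rxy) : Prop :=
  (∀ a b : ℤ, (a < 0 ∨ b < 0) → Q a b = 0) ∧
  Q 0 0 = 1 ∧
  Q 1 0 = X 0 ∧
  (∀ a b : ℤ, 0 ≤ a → 0 ≤ b →
    X 0 * Q a b = Q (a + 1) b + Q a (b - 1) + Q (a - 1) (b + 1)) ∧
  (∀ a b : ℤ, rename (Equiv.swap (0 : Fin 2) 1) (Q a b) = Q b a)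

/-- Defining property of the polynomials `P a b` (in the variables `s, t`), namely
`P_λ(x/y², y/x²) = x^{-λ₁} y^{-λ₂} Q_λ(x,y)` in the fraction field of ℤ[x,y]
(with the convention `P a b = 0` whenever `(a, b) ∉ ℕ₀²`). -/
def IsPSU3 (Q P : ℤ → ℤ → Rxy) : Prop :=
  (∀ a b : ℤ, (a < 0 ∨ b < 0) → P a b = 0) ∧
  (∀ a b : ℤ, 0 ≤ a → 0 ≤ b →
    evST (P a b) = algebraMap Rxy Kxy (Q a b) / (xx ^ a * yy ^ b))

/-!
Write `s^i t^k = (st)^min(i,k) s^(i-k)` or `(st)^min(i,k) t^(k-i)`. The claim then says that every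
monomial `s^i t^k` of `P_(a,b)` satisfies `-⌊a/2⌋ ≤ i - k ≤ ⌊b/2⌋`, and that for even `b`
(resp. even `a`) the extreme diagonal `i - k = b/2` (resp. `k - i = a/2`) is met only by
`s^(b/2)` (resp. `t^(a/2)`). Call this set of exponents `region a b`.

Dividing the recursion for `Q` by `x^(a+1) y^b` (and its mirror image by `x^a y^(b+1)`) gives
`P_(a+1,b) = P_(a,b) - st P_(a,b-1) - t P_(a-1,b+1)` and
`P_(a,b+1) = P_(a,b) - st P_(a-1,b) - s P_(a+1,b-1)`. These identities hold in `ℤ[s,t]` because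
`s, t` are algebraically independent: after multiplication by `(xy)^(2N)` distinct monomials
`s^i t^k` become distinct monomials `x^(i-2k+2N) y^(k-2i+2N)`. Multiplication by `st`, `s`, `t`
shifts exponents, and the shifted regions fit inside the target region, so induction on `a + b`
shows that the support of `P_(a,b)` lies in `region a b`.
-/

namespace SU3

lemma xx_ne_zero : xx ≠ 0 :=
  (map_ne_zero_iff _ (IsFractionRing.injective Rxy Kxy)).2 (X_ne_zero 0)

lemma yy_ne_zero : yy ≠ 0 :=
  (map_ne_zero_iff _ (IsFractionRing.injective Rxy Kxy)).2 (X_ne_zero 1)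

lemma monomial_eq_C_mul_X_pow_mul_X_pow (d : Fin 2 →₀ ℕ) (c : ℤ) :
    (monomial d c : Rxy) = C c * X 0 ^ d 0 * X 1 ^ d 1 := by
  rw [monomial_eq, Finsupp.prod_fintype _ _ fun _ => pow_zero _, Fin.prod_univ_two, mul_assoc]

/-- `(x y)^(2N) s^(d 0) t^(d 1) = x^(d 0 + 2 (N - d 1)) y^(d 1 + 2 (N - d 0))` when `d ≤ N`. -/
def clearDenom (N : ℕ) (d : Fin 2 →₀ ℕ) : Fin 2 →₀ ℕ :=
  Finsupp.single 0 (d 0 + 2 * (N - d 1)) + Finsupp.single 1 (d 1 + 2 * (N - d 0))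

lemma clearDenom_injOn (N : ℕ) :
    Set.InjOn (clearDenom N) {d | d 0 ≤ N ∧ d 1 ≤ N} := by
  intro d hd d' hd' h
  have h0 := congrArg (· 0) h
  have h1 := congrArg (· 1) h
  simp only [clearDenom, Finsupp.add_apply, Finsupp.single_apply] at h0 h1
  simp only [Set.mem_ofPred_eq] at hd hd'
  ext i
  fin_cases i <;> simp at h0 h1 ⊢ <;> omega

lemma xy_pow_mul_sv_pow_mul_tv_pow {i k u v : ℕ} (h : i + u = k + v) :
    (xx * yy) ^ (2 * (i + u)) * (sv ^ i * tv ^ k) = xx ^ (i + 2 * v) * yy ^ (k + 2 * u) := by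
  have hx := xx_ne_zero
  have hy := yy_ne_zero
  rw [mul_pow]
  nth_rw 1 [h]
  rw [sv, tv, div_pow, div_pow, ← pow_mul, ← pow_mul]
  field_simp
  ring

lemma evST_monomial (d : Fin 2 →₀ ℕ) (c : ℤ) :
    evST (monomial d c) = algebraMap ℤ Kxy c * (sv ^ d 0 * tv ^ d 1) := by
  simp [evST, monomial_eq_C_mul_X_pow_mul_X_pow, mul_assoc]

lemma algebraMap_monomial_clearDenom {N : ℕ} {d : Fin 2 →₀ ℕ} (h0 : d 0 ≤ N) (h1 : d 1 ≤ N)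
    (c : ℤ) : algebraMap Rxy Kxy (monomial (clearDenom N d) c) =
      (xx * yy) ^ (2 * N) * evST (monomial d c) := by
  obtain ⟨u, rfl⟩ := Nat.exists_eq_add_of_le h0
  obtain ⟨v, hv⟩ := Nat.exists_eq_add_of_le h1
  have e0 : clearDenom (d 0 + u) d 0 = d 0 + 2 * v := by simp [clearDenom, hv]
  have e1 : clearDenom (d 0 + u) d 1 = d 1 + 2 * u := by simp [clearDenom]
  rw [monomial_eq_C_mul_X_pow_mul_X_pow, e0, e1, evST_monomial, mul_left_comm,
    xy_pow_mul_sv_pow_mul_tv_pow hv]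
  simp [xx, yy, mul_assoc]

lemma eq_zero_of_evST_eq_zero {F : Rxy} (hF : evST F = 0) : F = 0 := by
  set N := F.degreeOf 0 + F.degreeOf 1
  have hbox : (F.support : Set (Fin 2 →₀ ℕ)) ⊆ {d | d 0 ≤ N ∧ d 1 ≤ N} := fun d hd =>
    ⟨(monomial_le_degreeOf 0 hd).trans (Nat.le_add_right _ _),
      (monomial_le_degreeOf 1 hd).trans (Nat.le_add_left _ _)⟩
  set G : Rxy := ∑ d ∈ F.support, monomial (clearDenom N d) (coeff d F)
  have hG : G = 0 := by
    apply IsFractionRing.injective Rxy Kxy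
    conv_rhs => rw [map_zero, ← mul_zero ((xx * yy) ^ (2 * N)), ← hF, F.as_sum]
    rw [map_sum, evST, map_sum, Finset.mul_sum]
    exact Finset.sum_congr rfl fun d hd =>
      algebraMap_monomial_clearDenom (hbox hd).1 (hbox hd).2 _
  have hcoeff : ∀ d ∈ F.support, coeff (clearDenom N d) G = coeff d F := by
    intro d hd
    rw [coeff_sum, Finset.sum_eq_single d (fun d' hd' hne => ?_) (fun h => absurd hd h),
      coeff_monomial, if_pos rfl]
    rw [coeff_monomial]
    exact if_neg fun h => hne (clearDenom_injOn N (hbox hd') (hbox hd) h)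
  refine support_eq_empty.1 (Finset.eq_empty_of_forall_notMem fun d hd => ?_)
  exact mem_support_iff.1 hd (by rw [← hcoeff d hd, hG, coeff_zero])

lemma evST_injective : Function.Injective evST := by
  intro F G h
  rw [← sub_eq_zero]
  exact eq_zero_of_evST_eq_zero (by rw [evST, map_sub, sub_eq_zero]; exact h)

section Recursion

variable {Q P : ℤ → ℤ → Rxy}

lemma evST_P (hQ : IsQSU3 Q) (hP : IsPSU3 Q P) (a b : ℤ) :
    evST (P a b) = algebraMap Rxy Kxy (Q a b) / (xx ^ a * yy ^ b) := by
  by_cases hab : a < 0 ∨ b < 0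
  · rw [hP.1 a b hab, hQ.1 a b hab, evST, map_zero, map_zero, zero_div]
  · rw [not_or, not_lt, not_lt] at hab
    exact hP.2 a b hab.1 hab.2

lemma X_one_mul_Q (hQ : IsQSU3 Q) {a b : ℤ} (ha : 0 ≤ a) (hb : 0 ≤ b) :
    X 1 * Q a b = Q a (b + 1) + Q (a - 1) b + Q (a + 1) (b - 1) := by
  have h := congrArg (rename (Equiv.swap (0 : Fin 2) 1)) (hQ.2.2.2.1 b a hb ha)
  simpa only [map_add, map_mul, rename_X, Equiv.swap_apply_left, hQ.2.2.2.2] using h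

lemma P_zero_zero (hQ : IsQSU3 Q) (hP : IsPSU3 Q P) : P 0 0 = 1 :=
  evST_injective <| by rw [evST_P hQ hP, hQ.2.1]; simp [evST]

lemma P_add_one_left (hQ : IsQSU3 Q) (hP : IsPSU3 Q P) {a b : ℤ} (ha : 0 ≤ a) (hb : 0 ≤ b) :
    P (a + 1) b = P a b - X 0 * X 1 * P a (b - 1) - X 1 * P (a - 1) (b + 1) := by
  apply evST_injective
  have hx := xx_ne_zero
  have hy := yy_ne_zero
  have hrec : algebraMap Rxy Kxy (Q (a + 1) b) = xx * algebraMap Rxy Kxy (Q a b) -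
      algebraMap Rxy Kxy (Q a (b - 1)) - algebraMap Rxy Kxy (Q (a - 1) (b + 1)) := by
    rw [xx, ← map_mul, hQ.2.2.2.1 a b ha hb]
    simp only [map_add]
    ring
  have h := evST_P hQ hP
  simp only [evST] at h ⊢
  simp only [map_sub, map_mul, aeval_X, Matrix.cons_val_zero, Matrix.cons_val_one, h, hrec]
  rw [zpow_add_one₀ hx, zpow_sub_one₀ hy, zpow_sub_one₀ hx, zpow_add_one₀ hy, sv, tv]
  field_simp

lemma P_add_one_right (hQ : IsQSU3 Q) (hP : IsPSU3 Q P) {a b : ℤ} (ha : 0 ≤ a) (hb : 0 ≤ b) :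
    P a (b + 1) = P a b - X 0 * X 1 * P (a - 1) b - X 0 * P (a + 1) (b - 1) := by
  apply evST_injective
  have hx := xx_ne_zero
  have hy := yy_ne_zero
  have hrec : algebraMap Rxy Kxy (Q a (b + 1)) = yy * algebraMap Rxy Kxy (Q a b) -
      algebraMap Rxy Kxy (Q (a - 1) b) - algebraMap Rxy Kxy (Q (a + 1) (b - 1)) := by
    rw [yy, ← map_mul, X_one_mul_Q hQ ha hb]
    simp only [map_add]
    ring
  have h := evST_P hQ hP
  simp only [evST] at h ⊢
  simp only [map_sub, map_mul, aeval_X, Matrix.cons_val_zero, Matrix.cons_val_one, h, hrec]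
  rw [zpow_add_one₀ hy, zpow_sub_one₀ hy, zpow_sub_one₀ hx, zpow_add_one₀ hx, sv, tv]
  field_simp

end Recursion

section Support

lemma monomial_one_mul_mem_restrictSupport {σ R : Type*} [CommSemiring R]
    {S T : Set (σ →₀ ℕ)} {e : σ →₀ ℕ} (h : ∀ d ∈ S, e + d ∈ T) {p : MvPolynomial σ R}
    (hp : p ∈ restrictSupport R S) : monomial e 1 * p ∈ restrictSupport R T := by
  classical
  rw [mem_restrictSupport_iff]
  intro d hd
  rw [Finset.mem_coe, mem_support_iff, coeff_monomial_mul', one_mul] at hd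
  split_ifs at hd with hed
  · rw [← add_tsub_cancel_of_le hed]
    exact h _ (hp (mem_support_iff.2 hd))
  · exact absurd rfl hd

lemma X_mul_X_eq_monomial :
    (X 0 * X 1 : Rxy) = monomial (Finsupp.single 0 1 + Finsupp.single 1 1) 1 := by
  rw [X, X, monomial_mul, one_mul]

lemma sub_X_mul_X_mul_sub_X_mul_mem {S₁ S₂ S₃ T : Set (Fin 2 →₀ ℕ)} {i : Fin 2}
    (h₁ : S₁ ⊆ T) (h₂ : ∀ d ∈ S₂, Finsupp.single 0 1 + Finsupp.single 1 1 + d ∈ T)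
    (h₃ : ∀ d ∈ S₃, Finsupp.single i 1 + d ∈ T) {p q r : Rxy}
    (hp : p ∈ restrictSupport ℤ S₁) (hq : q ∈ restrictSupport ℤ S₂)
    (hr : r ∈ restrictSupport ℤ S₃) :
    p - X 0 * X 1 * q - X i * r ∈ restrictSupport ℤ T := by
  rw [X_mul_X_eq_monomial]
  exact sub_mem (sub_mem (restrictSupport_mono ℤ h₁ hp)
    (monomial_one_mul_mem_restrictSupport h₂ hq)) (monomial_one_mul_mem_restrictSupport h₃ hr)

def region (a b : ℤ) : Set (Fin 2 →₀ ℕ) :=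
  {d | (d 0 : ℤ) ≤ d 1 + b / 2 ∧ (d 1 : ℤ) ≤ d 0 + a / 2 ∧
    (Even b → (d 0 : ℤ) = d 1 + b / 2 → d 1 = 0) ∧ (Even a → (d 1 : ℤ) = d 0 + a / 2 → d 0 = 0)}

variable {Q P : ℤ → ℤ → Rxy}

theorem P_mem_restrictSupport_region (hQ : IsQSU3 Q) (hP : IsPSU3 Q P) (a b : ℤ) :
    P a b ∈ restrictSupport ℤ (region a b) := by
  induction hn : (a + b).toNat using Nat.strong_induction_on generalizing a b with
  | _ n ih =>
  have ih' : ∀ a' b', a' + b' < a + b → 0 < a + b →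
      P a' b' ∈ restrictSupport ℤ (region a' b') :=
    fun a' b' h h0 => ih _ (by omega) a' b' rfl
  by_cases hneg : a < 0 ∨ b < 0
  · rw [hP.1 a b hneg]
    exact zero_mem _
  rw [not_or, not_lt, not_lt] at hneg
  obtain ⟨ha, hb⟩ := hneg
  rcases ha.eq_or_lt with rfl | ha
  · rcases hb.eq_or_lt with rfl | hb
    · rw [P_zero_zero hQ hP, ← C_1, C_apply, monomial_mem_restrictSupport]
      left
      simp [region]
    · obtain ⟨b, rfl⟩ : ∃ b', b = b' + 1 := ⟨b - 1, by ring⟩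
      rw [P_add_one_right hQ hP le_rfl (by omega)]
      refine sub_X_mul_X_mul_sub_X_mul_mem ?_ ?_ ?_ (ih' _ _ (by omega) (by omega))
        (ih' _ _ (by omega) (by omega)) (ih' _ _ (by omega) (by omega)) <;>
      · intro d hd
        simp only [region, Set.mem_ofPred_eq, Int.even_iff, Finsupp.add_apply,
          Finsupp.single_apply, Fin.one_eq_zero_iff, Fin.zero_eq_one_iff, Nat.reduceEqDiff,
          if_true, if_false] at hd ⊢
        omega
  · obtain ⟨a, rfl⟩ : ∃ a', a = a' + 1 := ⟨a - 1, by ring⟩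
    rw [P_add_one_left hQ hP (by omega) hb]
    refine sub_X_mul_X_mul_sub_X_mul_mem ?_ ?_ ?_ (ih' _ _ (by omega) (by omega))
      (ih' _ _ (by omega) (by omega)) (ih' _ _ (by omega) (by omega)) <;>
    · intro d hd
      simp only [region, Set.mem_ofPred_eq, Int.even_iff, Finsupp.add_apply,
        Finsupp.single_apply, Fin.one_eq_zero_iff, Fin.zero_eq_one_iff, Nat.reduceEqDiff,
        if_true, if_false] at hd ⊢
      omega

end Support

section Expansion

open Polynomial (degreeLE degreeLT mem_degreeLE mem_degreeLT lcoeff)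

def stExpansion (n : ℕ) (A B : ℕ → Polynomial ℤ) : Rxy :=
  ∑ j ∈ Finset.range (n + 1),
    (X 0 * X 1) ^ j * (Polynomial.aeval (X 0 : Rxy) (A j) + Polynomial.aeval (X 1 : Rxy) (B j))

lemma stExpansion_add (n : ℕ) (A B A' B' : ℕ → Polynomial ℤ) :
    stExpansion n (A + A') (B + B') = stExpansion n A B + stExpansion n A' B' := by
  simp only [stExpansion, ← Finset.sum_add_distrib, Pi.add_apply, map_add]
  exact Finset.sum_congr rfl fun _ _ => by ring

lemma stExpansion_single_left {n j : ℕ} (hj : j ≤ n) (q : Polynomial ℤ) :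
    stExpansion n (Pi.single j q) 0 = (X 0 * X 1) ^ j * Polynomial.aeval (X 0 : Rxy) q := by
  rw [stExpansion, Finset.sum_eq_single j (fun i _ hi => by simp [hi]) (by simp; omega)]
  simp

lemma stExpansion_single_right {n j : ℕ} (hj : j ≤ n) (q : Polynomial ℤ) :
    stExpansion n 0 (Pi.single j q) = (X 0 * X 1) ^ j * Polynomial.aeval (X 1 : Rxy) q := by
  rw [stExpansion, Finset.sum_eq_single j (fun i _ hi => by simp [hi]) (by simp; omega)]
  simp

lemma monomial_eq_mul_aeval_X_zero {d : Fin 2 →₀ ℕ} (h : d 1 ≤ d 0) (c : ℤ) :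
    monomial d c = (X 0 * X 1) ^ d 1 *
      Polynomial.aeval (X 0 : Rxy) (c • (Polynomial.X : Polynomial ℤ) ^ (d 0 - d 1)) := by
  obtain ⟨k, hk⟩ := Nat.exists_eq_add_of_le h
  rw [monomial_eq_C_mul_X_pow_mul_X_pow, hk, Nat.add_sub_cancel_left, map_zsmul, zsmul_eq_mul,
    ← eq_intCast (C : ℤ →+* Rxy)]
  simp only [map_pow, Polynomial.aeval_X]
  ring

lemma monomial_eq_mul_aeval_X_one {d : Fin 2 →₀ ℕ} (h : d 0 ≤ d 1) (c : ℤ) :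
    monomial d c = (X 0 * X 1) ^ d 0 *
      Polynomial.aeval (X 1 : Rxy) (c • (Polynomial.X : Polynomial ℤ) ^ (d 1 - d 0)) := by
  obtain ⟨k, hk⟩ := Nat.exists_eq_add_of_le h
  rw [monomial_eq_C_mul_X_pow_mul_X_pow, hk, Nat.add_sub_cancel_left, map_zsmul, zsmul_eq_mul,
    ← eq_intCast (C : ℤ →+* Rxy)]
  simp only [map_pow, Polynomial.aeval_X]
  ring

theorem exists_stExpansion (SA SB : ℕ → Submodule ℤ (Polynomial ℤ)) (p : Rxy)
    (hp : ∀ d ∈ p.support, (d 1 ≤ d 0 ∧ Polynomial.X ^ (d 0 - d 1) ∈ SA (d 1)) ∨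
      (d 0 ≤ d 1 ∧ Polynomial.X ^ (d 1 - d 0) ∈ SB (d 0))) :
    ∃ n A B, p = stExpansion n A B ∧ ∀ j, A j ∈ SA j ∧ B j ∈ SB j := by
  classical
  obtain ⟨n, hn⟩ : ∃ n, p.degreeOf 0 = n := ⟨_, rfl⟩
  refine ⟨n, ?_⟩
  rw [p.as_sum]
  refine Finset.sum_induction _
    (fun q => ∃ A B, q = stExpansion n A B ∧ ∀ j, A j ∈ SA j ∧ B j ∈ SB j)
    (fun q r ⟨A, B, hq, hAB⟩ ⟨A', B', hr, hAB'⟩ =>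
      ⟨A + A', B + B', by rw [hq, hr, stExpansion_add],
        fun j => ⟨add_mem (hAB j).1 (hAB' j).1, add_mem (hAB j).2 (hAB' j).2⟩⟩)
    ⟨0, 0, by simp [stExpansion], fun j => ⟨zero_mem _, zero_mem _⟩⟩ fun d hd => ?_
  have hd0 := hn ▸ monomial_le_degreeOf 0 hd
  rcases hp d hd with ⟨hle, hX⟩ | ⟨hle, hX⟩
  · refine ⟨Pi.single (d 1) (coeff d p • Polynomial.X ^ (d 0 - d 1)), 0, ?_,
      fun j => ⟨?_, zero_mem _⟩⟩
    · rw [stExpansion_single_left (hle.trans hd0), monomial_eq_mul_aeval_X_zero hle]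
    rcases eq_or_ne j (d 1) with rfl | hj
    · simpa using Submodule.smul_mem _ _ hX
    · simp [hj]
  · refine ⟨0, Pi.single (d 0) (coeff d p • Polynomial.X ^ (d 1 - d 0)), ?_,
      fun j => ⟨zero_mem _, ?_⟩⟩
    · rw [stExpansion_single_right hd0, monomial_eq_mul_aeval_X_one hle]
    rcases eq_or_ne j (d 0) with rfl | hj
    · simpa using Submodule.smul_mem _ _ hX
    · simp [hj]

variable {a b : ℕ} {p : Rxy}

theorem exists_stExpansion_of_mem_region (hp : p ∈ restrictSupport ℤ (region a b)) :
    ∃ n A B, p = stExpansion n A B ∧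
      (∀ j, (A j).degree ≤ ((b / 2 : ℕ) : WithBot ℕ)) ∧
      (∀ j, (B j).degree ≤ ((a / 2 : ℕ) : WithBot ℕ)) := by
  obtain ⟨n, A, B, h, hAB⟩ := exists_stExpansion (fun _ => degreeLE ℤ ((b / 2 : ℕ) : WithBot ℕ))
    (fun _ => degreeLE ℤ ((a / 2 : ℕ) : WithBot ℕ)) p fun d hd => by
      have hd := hp hd
      simp only [region, Set.mem_ofPred_eq, Int.even_iff] at hd
      simp only [mem_degreeLE, Polynomial.degree_X_pow, Nat.cast_le]
      omega
  exact ⟨n, A, B, h, fun j => mem_degreeLE.1 (hAB j).1, fun j => mem_degreeLE.1 (hAB j).2⟩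

theorem exists_stExpansion_of_mem_region_of_even_right (hb : Even b)
    (hp : p ∈ restrictSupport ℤ (region a b)) :
    ∃ n A B, p = stExpansion n A B ∧
      (∀ j, (A j).degree ≤ ((b / 2 : ℕ) : WithBot ℕ)) ∧
      (∀ j, (B j).degree ≤ ((a / 2 : ℕ) : WithBot ℕ)) ∧
      (∀ j, 0 < j → (A j).degree < ((b / 2 : ℕ) : WithBot ℕ)) ∧
      (∀ j, (B j).coeff 0 = 0) := by
  obtain ⟨n, A, B, h, hAB⟩ := exists_stExpansion
    (fun j => degreeLE ℤ ((b / 2 : ℕ) : WithBot ℕ) ⊓ ⨅ (_ : 0 < j), degreeLT ℤ (b / 2))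
    (fun _ => degreeLE ℤ ((a / 2 : ℕ) : WithBot ℕ) ⊓ LinearMap.ker (lcoeff ℤ 0)) p fun d hd => by
      have hd := hp hd
      rw [Nat.even_iff] at hb
      simp only [region, Set.mem_ofPred_eq, Int.even_iff] at hd
      simp only [Submodule.mem_inf, Submodule.mem_iInf, mem_degreeLE, mem_degreeLT,
        Polynomial.degree_X_pow, Nat.cast_le, Nat.cast_lt, LinearMap.mem_ker,
        Polynomial.lcoeff_apply, Polynomial.coeff_X_pow, ite_eq_right_iff, one_ne_zero, imp_false]
      omega
  refine ⟨n, A, B, h, fun j => ?_, fun j => ?_, fun j hj => ?_, fun j => ?_⟩ <;>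
    simp only [Submodule.mem_inf, Submodule.mem_iInf, mem_degreeLE, mem_degreeLT,
      LinearMap.mem_ker, Polynomial.lcoeff_apply] at hAB
  exacts [(hAB j).1.1, (hAB j).2.1, (hAB j).1.2 hj, (hAB j).2.2]

theorem exists_stExpansion_of_mem_region_of_even_left (ha : Even a)
    (hp : p ∈ restrictSupport ℤ (region a b)) :
    ∃ n A B, p = stExpansion n A B ∧
      (∀ j, (A j).degree ≤ ((b / 2 : ℕ) : WithBot ℕ)) ∧
      (∀ j, (B j).degree ≤ ((a / 2 : ℕ) : WithBot ℕ)) ∧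
      (∀ j, 0 < j → (B j).degree < ((a / 2 : ℕ) : WithBot ℕ)) ∧
      (∀ j, (A j).coeff 0 = 0) := by
  obtain ⟨n, A, B, h, hAB⟩ := exists_stExpansion
    (fun _ => degreeLE ℤ ((b / 2 : ℕ) : WithBot ℕ) ⊓ LinearMap.ker (lcoeff ℤ 0))
    (fun j => degreeLE ℤ ((a / 2 : ℕ) : WithBot ℕ) ⊓ ⨅ (_ : 0 < j), degreeLT ℤ (a / 2)) p
    fun d hd => by
      have hd := hp hd
      rw [Nat.even_iff] at ha
      simp only [region, Set.mem_ofPred_eq, Int.even_iff] at hd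
      simp only [Submodule.mem_inf, Submodule.mem_iInf, mem_degreeLE, mem_degreeLT,
        Polynomial.degree_X_pow, Nat.cast_le, Nat.cast_lt, LinearMap.mem_ker,
        Polynomial.lcoeff_apply, Polynomial.coeff_X_pow, ite_eq_right_iff, one_ne_zero, imp_false]
      omega
  refine ⟨n, A, B, h, fun j => ?_, fun j => ?_, fun j hj => ?_, fun j => ?_⟩ <;>
    simp only [Submodule.mem_inf, Submodule.mem_iInf, mem_degreeLE, mem_degreeLT,
      LinearMap.mem_ker, Polynomial.lcoeff_apply] at hAB
  exacts [(hAB j).1.1, (hAB j).2.1, (hAB j).2.2 hj, (hAB j).1.2]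

end Expansion

end SU3

theorem stmt_7 (Q P : ℤ → ℤ → Rxy) (hQ : IsQSU3 Q) (hP : IsPSU3 Q P) (l1 l2 : ℕ) :
    (∃ (n : ℕ) (A B : ℕ → Polynomial ℤ),
      P (l1 : ℤ) (l2 : ℤ) = ∑ j ∈ Finset.range (n + 1),
          (X 0 * X 1) ^ j *
            (Polynomial.aeval (X 0 : Rxy) (A j) + Polynomial.aeval (X 1 : Rxy) (B j)) ∧
      (∀ j, (A j).degree ≤ ((l2 / 2 : ℕ) : WithBot ℕ)) ∧
      (∀ j, (B j).degree ≤ ((l1 / 2 : ℕ) : WithBot ℕ))) ∧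
    (Even l2 → ∃ (n : ℕ) (A B : ℕ → Polynomial ℤ),
      P (l1 : ℤ) (l2 : ℤ) = ∑ j ∈ Finset.range (n + 1),
          (X 0 * X 1) ^ j *
            (Polynomial.aeval (X 0 : Rxy) (A j) + Polynomial.aeval (X 1 : Rxy) (B j)) ∧
      (∀ j, (A j).degree ≤ ((l2 / 2 : ℕ) : WithBot ℕ)) ∧
      (∀ j, (B j).degree ≤ ((l1 / 2 : ℕ) : WithBot ℕ)) ∧
      (∀ j, 0 < j → (A j).degree < ((l2 / 2 : ℕ) : WithBot ℕ)) ∧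
      (∀ j, (B j).coeff 0 = 0)) ∧
    (Even l1 → ∃ (n : ℕ) (A B : ℕ → Polynomial ℤ),
      P (l1 : ℤ) (l2 : ℤ) = ∑ j ∈ Finset.range (n + 1),
          (X 0 * X 1) ^ j *
            (Polynomial.aeval (X 0 : Rxy) (A j) + Polynomial.aeval (X 1 : Rxy) (B j)) ∧
      (∀ j, (A j).degree ≤ ((l2 / 2 : ℕ) : WithBot ℕ)) ∧
      (∀ j, (B j).degree ≤ ((l1 / 2 : ℕ) : WithBot ℕ)) ∧
      (∀ j, 0 < j → (B j).degree < ((l1 / 2 : ℕ) : WithBot ℕ)) ∧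
      (∀ j, (A j).coeff 0 = 0)) := by
  have hmem := SU3.P_mem_restrictSupport_region hQ hP l1 l2
  exact ⟨SU3.exists_stExpansion_of_mem_region hmem,
    fun h => SU3.exists_stExpansion_of_mem_region_of_even_right h hmem,
    fun h => SU3.exists_stExpansion_of_mem_region_of_even_left h hmem⟩
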